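/- arXiv:2507.03661 — 2 statements merged into one kernel-verified Lean document; each statement's English description precedes it below -/
import Mathlib

section
/- Let σ₁: (Γ¹, Γ_B) → R^± and σ₂: (Γ², Γ_B) → R^± be strong formal subdivisions with boundary sharing the same boundary σ_B: Γ_B → R^−, where Γ¹ and Γ² are lower Eulerian posets and R is an Eulerian poset. Then the local h-polynomial of the agglutination σ₁ ♯_{σ_B} σ₂: Γ¹ ♯_{Γ_B} Γ² → R satisfies ℓ_R(Γ¹ ♯_{Γ_B} Γ²; t) = ℓ_{R^±}(Γ¹; t) + ℓ_{R^±}(Γ²; t) + (t + 1) ℓ_{R^−}(Γ_B; t), where ℓ_{R^±}(Γ^i; t) is the local h-polynomial of σ_i and ℓ_{R^−}(Γ_B; t) that of σ_B: Γ_B → R^− (R^− being Eulerian, isomorphic to R). -/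
attribute [local instance] Classical.propDecidable

noncomputable section

/-- The finite subposet `S` (with induced order) is ranked with rank function `ρ`:
ranks strictly increase, and covering relations (within `S`) increase rank by one. -/
def IsRankedOn {α : Type*} [PartialOrder α] (S : Finset α) (ρ : α → ℕ) : Prop :=
  (∀ x ∈ S, ∀ y ∈ S, x < y → ρ x < ρ y) ∧
  (∀ x ∈ S, ∀ y ∈ S, x < y → (∀ z ∈ S, ¬ (x < z ∧ z < y)) → ρ y = ρ x + 1)

/-- The finite subposet `S` is locally Eulerian: it is ranked and every nontrivial
interval `[x,y]` in `S` has equally many elements of even and of odd rank. -/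
def IsLocallyEulerianOn {α : Type*} [PartialOrder α] (S : Finset α) (ρ : α → ℕ) : Prop :=
  IsRankedOn S ρ ∧
  ∀ x ∈ S, ∀ y ∈ S, x < y →
    (S.filter (fun z => x ≤ z ∧ z ≤ y ∧ Even (ρ z))).card =
    (S.filter (fun z => x ≤ z ∧ z ≤ y ∧ ¬ Even (ρ z))).card

/-- Lower Eulerian: locally Eulerian with a minimum. -/
def IsLowerEulerianOn {α : Type*} [PartialOrder α] (S : Finset α) (ρ : α → ℕ) : Prop :=
  IsLocallyEulerianOn S ρ ∧ ∃ b ∈ S, ∀ x ∈ S, b ≤ x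

/-- Eulerian: lower Eulerian with a maximum. -/
def IsEulerianOn {α : Type*} [PartialOrder α] (S : Finset α) (ρ : α → ℕ) : Prop :=
  IsLowerEulerianOn S ρ ∧ ∃ t ∈ S, ∀ x ∈ S, x ≤ t

/-- `G` is a system of `g`-polynomials for the intervals of the finite poset `S` with rank
function `ρ`: `G x y = g([x,y]; t)`.  Defining property: `G x x = 1` and, for `x < y` of
rank difference `r`, `deg (G x y) < r/2` and
`t^r · (G x y)(1/t) = Σ_{x ≤ z ≤ y} (G x z) · (t−1)^{r − (ρ z − ρ x)}`
(the left-hand side being `Polynomial.reflect r (G x y)`). -/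
def IsGSystemOn {α : Type*} [PartialOrder α] (S : Finset α) (ρ : α → ℕ)
    (G : α → α → Polynomial ℤ) : Prop :=
  (∀ x ∈ S, G x x = 1) ∧
  ∀ x ∈ S, ∀ y ∈ S, x < y →
    2 * (G x y).natDegree < ρ y - ρ x ∧
    Polynomial.reflect (ρ y - ρ x) (G x y) =
      ∑ z ∈ S.filter (fun z => x ≤ z ∧ z ≤ y), G x z * (Polynomial.X - 1) ^ (ρ y - ρ z)

/-- `G` is a system of `g`-polynomials of the *dual* intervals of `S`: `G x y = g([x,y]^*; t)`. -/
def IsDualGSystemOn {α : Type*} [PartialOrder α] (S : Finset α) (ρ : α → ℕ)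
    (G : α → α → Polynomial ℤ) : Prop :=
  (∀ x ∈ S, G x x = 1) ∧
  ∀ x ∈ S, ∀ y ∈ S, x < y →
    2 * (G x y).natDegree < ρ y - ρ x ∧
    Polynomial.reflect (ρ y - ρ x) (G x y) =
      ∑ z ∈ S.filter (fun z => x ≤ z ∧ z ≤ y), G z y * (Polynomial.X - 1) ^ (ρ z - ρ x)

/-- The `h`-polynomial of a finite lower Eulerian poset `S` with minimum `b`, rank function
`ρ` and `g`-polynomial system `G`: it is defined by
`t^n · h(S;1/t) = Σ_{x ∈ S} g([b,x];t) (t−1)^{n−ρ(b,x)}` where `n = rk S`; equivalently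
`h(S;t) = reflect n (Σ_{x ∈ S} G b x · (t−1)^{sup ρ − ρ x})`, with `n = S.sup ρ − ρ b`. -/
def hPoly {α : Type*} [PartialOrder α] (ρ : α → ℕ) (G : α → α → Polynomial ℤ)
    (S : Finset α) (b : α) : Polynomial ℤ :=
  Polynomial.reflect (S.sup ρ - ρ b)
    (∑ x ∈ S, G b x * (Polynomial.X - 1) ^ (S.sup ρ - ρ x))

/-- The relative local `h`-polynomial `ℓ_B(Γ, x, y; t)` of an order-preserving map
`σ : Γ → B` (with `Γ` realized as the finite poset `S` in `α`, and `B` as the finite poset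
`T` in `β`), for `y ∈ Γ` and `x ∈ B` with `σ y ≤ x`:
`ℓ_B(Γ, x, y; t) = Σ_{σ(y) ≤ x' ≤ x} h((Γ_{≥y})_{x'}; t) · (−1)^{ρ(x',x)} · g([x',x]^*; t)`,
where `(Γ_{≥y})_{x'} = {y' ∈ Γ : y ≤ y', σ y' ≤ x'}`, `ρA, G` give the `h`-polynomials on
the source side, and `G'` is a system of `g`-polynomials of dual intervals of `T`. -/
def relLocH {α β : Type*} [PartialOrder α] [PartialOrder β]
    (ρA : α → ℕ) (G : α → α → Polynomial ℤ) (σ : α → β) (S : Finset α) (y : α)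
    (ρB : β → ℕ) (G' : β → β → Polynomial ℤ) (T : Finset β) (x : β) : Polynomial ℤ :=
  ∑ x' ∈ T.filter (fun x' => σ y ≤ x' ∧ x' ≤ x),
    (-1 : Polynomial ℤ) ^ (ρB x - ρB x') *
      hPoly ρA G (S.filter (fun y' => y ≤ y' ∧ σ y' ≤ x')) y * G' x' x

/-- `σ` is a strong formal subdivision from the finite poset `S ⊆ α` (rank function `ρA`)
to the finite poset `T ⊆ β` (rank function `ρB`): it is order preserving, rank increasing,
strongly surjective, and satisfies the Euler-characteristic condition
`Σ_{y' ≥ y, σ y' = x} (−1)^{ρB x − ρA y'} = 1` whenever `y ∈ S`, `x ∈ T`, `σ y ≤ x`. -/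
def IsSFSOn {α β : Type*} [PartialOrder α] [PartialOrder β]
    (S : Finset α) (ρA : α → ℕ) (σ : α → β) (T : Finset β) (ρB : β → ℕ) : Prop :=
  (∀ y ∈ S, σ y ∈ T) ∧
  (∀ y ∈ S, ∀ y' ∈ S, y ≤ y' → σ y ≤ σ y') ∧
  (∀ y ∈ S, ρA y ≤ ρB (σ y)) ∧
  (∀ x ∈ T, ∃ y ∈ S, σ y = x) ∧
  (∀ y ∈ S, ∀ x ∈ T, σ y ≤ x → ∃ y' ∈ S, y ≤ y' ∧ ρA y' = ρB x ∧ σ y' = x) ∧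
  (∀ y ∈ S, ∀ x ∈ T, σ y ≤ x →
    ∑ y' ∈ S.filter (fun y' => y ≤ y' ∧ σ y' = x), (-1 : ℤ) ^ (ρB x - ρA y') = 1)

/-!
Fix `x ∈ R`. The fibre of the agglutinated map over `x` is the union of the fibres of `σ₁` and
`σ₂` over `(x, true)`, which meet in the fibre of `σ_B` over `x`; the latter has rank one less, so
inclusion–exclusion on the sums defining the `h`-polynomials gives
`h(F) = h(F₁) + h(F₂) + (t - 1) h(F_B)`. The fibre of `σᵢ` over the twin `(x, false)` is again the
boundary fibre. Finally, the dual `g`-polynomials of the intervals `[(x, ε), (t, true)]` of `R^±`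
equal that of `[x, t]` in `R`: both solve the same recursion, and a solution is unique because a
polynomial of degree `< m / 2` fixed by `reflect m` vanishes. Summing over `x` with the signs
`(-1) ^ ρ(x, t)` gives the identity.
-/

open Polynomial Finset

namespace Polynomial

theorem eq_zero_of_reflect_eq_self {R : Type*} [Semiring R] {m : ℕ} {p : R[X]}
    (hp : 2 * p.natDegree < m) (hfix : reflect m p = p) : p = 0 := by
  by_contra hp0
  have hcoeff : (reflect m p).coeff p.natDegree = p.coeff (m - p.natDegree) := by
    rw [coeff_reflect, revAt_le (by omega)]
  rw [hfix] at hcoeff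
  exact leadingCoeff_ne_zero.mpr hp0 (hcoeff.trans (coeff_eq_zero_of_natDegree_lt (by omega)))

theorem eq_of_reflect_sub_self_eq {R : Type*} [Ring R] {m : ℕ} {p q : R[X]}
    (hp : 2 * p.natDegree < m) (hq : 2 * q.natDegree < m)
    (h : reflect m p - p = reflect m q - q) : p = q := by
  refine sub_eq_zero.mp (eq_zero_of_reflect_eq_self (m := m) ?_ ?_)
  · have := natDegree_sub_le p q
    omega
  · rw [reflect_sub]; exact sub_eq_sub_iff_sub_eq_sub.mp h

end Polynomial

section Twins

variable {β : Type*} [PartialOrder β] {T : Finset β} {ρ : β → ℕ} {G : β → β → ℤ[X]}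
  {Gpm : β × Bool → β × Bool → ℤ[X]}

theorem IsDualGSystemOn.reflect_eq_sum (hG : IsDualGSystemOn T ρ G) {x y : β} (hx : x ∈ T)
    (hy : y ∈ T) (hxy : x ≤ y) :
    reflect (ρ y - ρ x) (G x y) =
      ∑ z ∈ T.filter (fun z => x ≤ z ∧ z ≤ y), G z y * (X - 1) ^ (ρ z - ρ x) := by
  rcases hxy.eq_or_lt with rfl | hlt
  · have hI : T.filter (fun z => x ≤ z ∧ z ≤ x) = {x} := by
      ext z
      simp only [mem_filter, mem_singleton, ← le_antisymm_iff, eq_comm (a := z)]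
      exact ⟨And.right, fun h => ⟨h ▸ hx, h⟩⟩
    simp [hI, hG.1 x hx, reflect_one]
  · exact (hG.2 x hx y hy hlt).2

theorem IsDualGSystemOn.two_mul_natDegree_le (hG : IsDualGSystemOn T ρ G) {x y : β}
    (hx : x ∈ T) (hy : y ∈ T) (hxy : x ≤ y) : 2 * (G x y).natDegree ≤ ρ y - ρ x := by
  rcases hxy.eq_or_lt with rfl | hlt
  · simp [hG.1 x hx]
  · exact (hG.2 x hx y hy hlt).1.le

-- The instance argument lets these rewrite the filters produced by the definitions above, which
-- are decided by `Classical.propDecidable` rather than by the instances on `β × Bool`.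
theorem filter_twins_interval_true (T : Finset β) (x y : β)
    [DecidablePred fun z : β × Bool => (x, true) ≤ z ∧ z ≤ (y, true)] :
    (T ×ˢ univ).filter (fun z : β × Bool => (x, true) ≤ z ∧ z ≤ (y, true)) =
      T.filter (fun z => x ≤ z ∧ z ≤ y) ×ˢ {true} := by
  ext ⟨z, ε⟩
  cases ε <;> simp

theorem filter_twins_interval_false (T : Finset β) (x y : β)
    [DecidablePred fun z : β × Bool => (x, false) ≤ z ∧ z ≤ (y, true)] :
    (T ×ˢ univ).filter (fun z : β × Bool => (x, false) ≤ z ∧ z ≤ (y, true)) =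
      T.filter (fun z => x ≤ z ∧ z ≤ y) ×ˢ univ := by
  ext ⟨z, ε⟩
  simp


theorem IsDualGSystemOn.twins_true (hρ : StrictMonoOn ρ T) (hG : IsDualGSystemOn T ρ G)
    (hGpm : IsDualGSystemOn (T ×ˢ univ) (fun p => ρ p.1 + p.2.toNat) Gpm) {y : β}
    (hy : y ∈ T) {x : β} (hx : x ∈ T) (hxy : x ≤ y) : Gpm (x, true) (y, true) = G x y := by
  induction hk : ρ y - ρ x using Nat.strong_induction_on generalizing x with
  | _ k ih =>
  rcases hxy.eq_or_lt with rfl | hlt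
  · rw [hGpm.1 _ (by simpa), hG.1 x hx]
  set I := T.filter (fun z => x ≤ z ∧ z ≤ y)
  have hxI : x ∈ I := mem_filter.mpr ⟨hx, le_rfl, hxy⟩
  have hIH : ∀ z ∈ I.erase x,
      Gpm (z, true) (y, true) * (X - 1) ^ (ρ z - ρ x) = G z y * (X - 1) ^ (ρ z - ρ x) := by
    intro z hz
    obtain ⟨hzx, hzT, hxz, hzy⟩ : z ≠ x ∧ z ∈ T ∧ x ≤ z ∧ z ≤ y := by simpa [I] using hz
    have hxz' := lt_of_le_of_ne hxz (Ne.symm hzx)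
    rw [ih _ (hk ▸ Nat.sub_lt_sub_left (hρ hx hy (hxz'.trans_le hzy)) (hρ hx hzT hxz')) hzT hzy rfl]
  obtain ⟨hdeg, hrec⟩ := hGpm.2 (x, true) (by simpa) (y, true) (by simpa) (by simpa using hlt)
  obtain ⟨hdeg', hrec'⟩ := hG.2 x hx y hy hlt
  simp only [Bool.toNat_true, Nat.add_sub_add_right, filter_twins_interval_true, sum_product,
    sum_singleton] at hdeg hrec
  refine eq_of_reflect_sub_self_eq hdeg hdeg' ?_
  rw [hrec, hrec', ← add_sum_erase _ _ hxI, ← add_sum_erase _ _ hxI, sum_congr rfl hIH]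
  simp

theorem IsDualGSystemOn.twins_false (hρ : StrictMonoOn ρ T) (hG : IsDualGSystemOn T ρ G)
    (hGpm : IsDualGSystemOn (T ×ˢ univ) (fun p => ρ p.1 + p.2.toNat) Gpm) {y : β}
    (hy : y ∈ T) {x : β} (hx : x ∈ T) (hxy : x ≤ y) : Gpm (x, false) (y, true) = G x y := by
  induction hk : ρ y - ρ x using Nat.strong_induction_on generalizing x with
  | _ k ih =>
  set I := T.filter (fun z => x ≤ z ∧ z ≤ y)
  have hxI : x ∈ I := mem_filter.mpr ⟨hx, le_rfl, hxy⟩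
  have hρI : ∀ z ∈ I, ρ x ≤ ρ z := fun z hz =>
    hρ.monotoneOn hx (mem_filter.mp hz).1 (mem_filter.mp hz).2.1
  have hIH : ∀ z ∈ I.erase x,
      Gpm (z, false) (y, true) * (X - 1) ^ (ρ z - ρ x) = G z y * (X - 1) ^ (ρ z - ρ x) := by
    intro z hz
    obtain ⟨hzx, hzT, hxz, hzy⟩ : z ≠ x ∧ z ∈ T ∧ x ≤ z ∧ z ≤ y := by simpa [I] using hz
    have hxz' := lt_of_le_of_ne hxz (Ne.symm hzx)
    rw [ih _ (hk ▸ Nat.sub_lt_sub_left (hρ hx hy (hxz'.trans_le hzy)) (hρ hx hzT hxz')) hzT hzy rfl]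
  have htrue : ∀ z ∈ I, Gpm (z, true) (y, true) * (X - 1) ^ (ρ z + 1 - ρ x) =
      (X - 1) * (G z y * (X - 1) ^ (ρ z - ρ x)) := by
    intro z hz
    rw [hG.twins_true hρ hGpm hy (mem_filter.mp hz).1 (mem_filter.mp hz).2.2,
      Nat.sub_add_comm (hρI z hz), pow_succ]
    ring
  have hρxy := hρ.monotoneOn hx hy hxy
  have hQ : reflect (ρ y - ρ x) (G x y) =
      G x y + ∑ z ∈ I.erase x, G z y * (X - 1) ^ (ρ z - ρ x) := by
    rw [hG.reflect_eq_sum hx hy hxy, ← add_sum_erase _ _ hxI]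
    simp
  obtain ⟨hdeg, hrec⟩ := hGpm.2 (x, false) (by simpa) (y, true) (by simpa)
    (Prod.mk_lt_mk.mpr (Or.inr ⟨hxy, Bool.false_lt_true⟩))
  simp only [Bool.toNat_true, Bool.toNat_false, add_zero, filter_twins_interval_false,
    sum_product, Fintype.sum_bool, sum_add_distrib, Nat.sub_add_comm hρxy] at hdeg hrec
  rw [sum_congr rfl htrue, ← mul_sum, ← hG.reflect_eq_sum hx hy hxy, ← add_sum_erase _ _ hxI,
    sum_congr rfl hIH] at hrec
  have hreflQ : reflect (ρ y - ρ x + 1) (G x y) = X * reflect (ρ y - ρ x) (G x y) := by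
    have := hG.two_mul_natDegree_le hx hy hxy
    simpa [add_comm, reflect_one] using
      reflect_mul (1 : ℤ[X]) (G x y) (F := 1) (G := ρ y - ρ x) (by simp) (by omega)
  refine eq_of_reflect_sub_self_eq hdeg
    (by have := hG.two_mul_natDegree_le hx hy hxy; omega) ?_
  rw [hrec, hreflQ]
  simp only [Nat.sub_self, pow_zero, mul_one] at hQ hrec ⊢
  linear_combination (-1 : ℤ[X]) * hQ

end Twins

theorem relLocH_twins {α β : Type*} [PartialOrder α] [PartialOrder β] {ρA : α → ℕ}
    {G : α → α → ℤ[X]} {σ : α → β × Bool} {S : Finset α} {b : α} {R : Finset β}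
    {ρR : β → ℕ} {G'R : β → β → ℤ[X]} {G'pm : β × Bool → β × Bool → ℤ[X]}
    (hρR : StrictMonoOn ρR R) (hG'R : IsDualGSystemOn R ρR G'R)
    (hG'pm : IsDualGSystemOn (R ×ˢ univ) (fun p => ρR p.1 + p.2.toNat) G'pm)
    {t : β} (ht : t ∈ R) (hσb : (σ b).2 = false) :
    relLocH ρA G σ S b (fun p => ρR p.1 + p.2.toNat) G'pm (R ×ˢ univ) (t, true) =
      ∑ x ∈ R.filter (fun x => (σ b).1 ≤ x ∧ x ≤ t), (-1) ^ (ρR t - ρR x) *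
        (hPoly ρA G (S.filter fun y => b ≤ y ∧ (σ y).1 ≤ x) b -
          hPoly ρA G (S.filter fun y => b ≤ y ∧ (σ y).1 ≤ x ∧ (σ y).2 = false) b) * G'R x t := by
  obtain ⟨c, hc⟩ : ∃ c, σ b = (c, false) := ⟨_, Prod.ext rfl hσb⟩
  rw [relLocH, hc, filter_twins_interval_false, sum_product]
  refine sum_congr rfl fun x hx => ?_
  obtain ⟨hxR, -, hxt⟩ := mem_filter.mp hx
  rw [Fintype.sum_bool, hG'R.twins_true hρR hG'pm ht hxR hxt,
    hG'R.twins_false hρR hG'pm ht hxR hxt]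
  simp only [Prod.le_def, Bool.le_iff_imp, implies_true, and_true, Bool.false_eq_true, imp_false,
    Bool.not_eq_true, Bool.toNat_true, Bool.toNat_false, add_zero, Nat.add_sub_add_right,
    Nat.sub_add_comm (hρR.monotoneOn hxR ht hxt), pow_succ]
  ring

section HPoly

variable {α : Type*} [PartialOrder α] {S : Finset α} {ρ : α → ℕ} {G : α → α → ℤ[X]}

theorem IsGSystemOn.natDegree_add_le (hG : IsGSystemOn S ρ G) {b y : α} (hb : b ∈ S)
    (hy : y ∈ S) (hby : b ≤ y) (hρ : ρ b ≤ ρ y) : (G b y).natDegree + ρ b ≤ ρ y := by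
  rcases hby.eq_or_lt with rfl | hlt
  · simp [hG.1 b hb]
  · have := (hG.2 b hb y hy hlt).1
    omega

theorem hPoly_union {S T : Finset α} {b : α} {n : ℕ} (hS : S.sup ρ = n + 1)
    (hT : T.sup ρ = n + 1) (hST : (S ∩ T).sup ρ = n) (hb : ρ b ≤ n)
    (hdeg : ∀ y ∈ S ∩ T, (G b y).natDegree + ρ b ≤ ρ y) :
    hPoly ρ G (S ∪ T) b = hPoly ρ G S b + hPoly ρ G T b + (X - 1) * hPoly ρ G (S ∩ T) b := by
  have hρST : ∀ y ∈ S ∩ T, ρ y ≤ n := fun y hy => hST ▸ le_sup hy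
  have hX : (X - 1 : ℤ[X]).natDegree ≤ 1 := by simpa using natDegree_X_sub_C_le (1 : ℤ)
  have hsum := sum_union_inter (s₁ := S) (s₂ := T)
    (f := fun y => G b y * (X - 1) ^ (n + 1 - ρ y))
  have hfactor : ∑ y ∈ S ∩ T, G b y * (X - 1) ^ (n + 1 - ρ y) =
      (X - 1) * ∑ y ∈ S ∩ T, G b y * (X - 1) ^ (n - ρ y) := by
    rw [mul_sum]
    refine sum_congr rfl fun y hy => ?_
    rw [Nat.sub_add_comm (hρST y hy), pow_succ]
    ring
  have hdegST : (∑ y ∈ S ∩ T, G b y * (X - 1) ^ (n - ρ y)).natDegree ≤ n - ρ b := by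
    refine natDegree_sum_le_of_forall_le _ _ fun y hy => ?_
    have := hdeg y hy
    have := hρST y hy
    calc (G b y * (X - 1) ^ (n - ρ y)).natDegree
        ≤ (G b y).natDegree + (n - ρ y) := by
          refine natDegree_mul_le.trans (Nat.add_le_add_left ?_ _)
          simpa using natDegree_pow_le_of_le (n - ρ y) hX
      _ ≤ n - ρ b := by omega
  have hreflect : reflect (n + 1 - ρ b) ((X - 1) * ∑ y ∈ S ∩ T, G b y * (X - 1) ^ (n - ρ y)) =
      (1 - X) * reflect (n - ρ b) (∑ y ∈ S ∩ T, G b y * (X - 1) ^ (n - ρ y)) := by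
    rw [Nat.sub_add_comm hb, add_comm, reflect_mul _ _ hX hdegST]
    simp [reflect_sub, reflect_one]
  rw [hPoly, hPoly, hPoly, hPoly, sup_union, hS, hT, hST, max_self, eq_sub_of_add_eq hsum,
    hfactor, reflect_sub, reflect_add, hreflect]
  ring

end HPoly

theorem IsSFSOn.sup_filter {α β : Type*} [PartialOrder α] [PartialOrder β] {S : Finset α}
    {ρA : α → ℕ} {σ : α → β} {T : Finset β} {ρB : β → ℕ} (hσ : IsSFSOn S ρA σ T ρB)
    (hρB : MonotoneOn ρB T) {y : α} {x : β} (hy : y ∈ S) (hx : x ∈ T) (hyx : σ y ≤ x) :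
    (S.filter fun y' => y ≤ y' ∧ σ y' ≤ x).sup ρA = ρB x := by
  refine le_antisymm (Finset.sup_le fun y' hy' => ?_) ?_
  · obtain ⟨hy'S, -, hy'x⟩ := mem_filter.mp hy'
    exact (hσ.2.2.1 y' hy'S).trans (hρB (hσ.1 y' hy'S) hx hy'x)
  · obtain ⟨w, hwS, hyw, hρw, hσw⟩ := hσ.2.2.2.2.1 y hy x hx hyx
    exact hρw ▸ le_sup (mem_filter.mpr ⟨hwS, hyw, hσw.le⟩)

theorem MonotoneOn.twins {β : Type*} [PartialOrder β] {ρ : β → ℕ} {T : Finset β}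
    (hρ : MonotoneOn ρ T) :
    MonotoneOn (fun p : β × Bool => ρ p.1 + p.2.toNat) (T ×ˢ univ : Finset (β × Bool)) :=
  fun _ hp _ hq hpq => add_le_add (hρ (mem_product.mp hp).1 (mem_product.mp hq).1 hpq.1)
    (Bool.toNat_le_toNat hpq.2)

theorem IsSFSOn.sup_filter_twins {α β : Type*} [PartialOrder α] [PartialOrder β] {S : Finset α}
    {ρA : α → ℕ} {σ : α → β × Bool} {R : Finset β} {ρR : β → ℕ}
    (hσ : IsSFSOn S ρA σ (R ×ˢ univ) (fun p => ρR p.1 + p.2.toNat)) (hρR : MonotoneOn ρR R)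
    {y : α} {x : β} (hy : y ∈ S) (hx : x ∈ R) (hyx : (σ y).1 ≤ x) :
    (S.filter fun y' => y ≤ y' ∧ (σ y').1 ≤ x).sup ρA = ρR x + 1 := by
  have := hσ.sup_filter hρR.twins hy (mem_product.mpr ⟨hx, mem_univ true⟩)
    (show σ y ≤ (x, true) from Prod.le_def.mpr ⟨hyx, Bool.le_true _⟩)
  simpa [Prod.le_def] using this

section Agglutination

variable {α β : Type*} [PartialOrder α] [PartialOrder β] {Γ₁ Γ₂ : Finset α}

theorem filter_union_ite {f₁ f₂ : α → β} (hagree : ∀ y ∈ Γ₁ ∩ Γ₂, f₁ y = f₂ y) (b : α)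
    (x : β) :
    (Γ₁ ∪ Γ₂).filter (fun y => b ≤ y ∧ (if y ∈ Γ₁ then f₁ y else f₂ y) ≤ x) =
      Γ₁.filter (fun y => b ≤ y ∧ f₁ y ≤ x) ∪ Γ₂.filter (fun y => b ≤ y ∧ f₂ y ≤ x) := by
  ext y
  by_cases hy₁ : y ∈ Γ₁
  · by_cases hy₂ : y ∈ Γ₂
    · simp [hy₁, hy₂, hagree y (mem_inter.mpr ⟨hy₁, hy₂⟩)]
    · simp [hy₁, hy₂]
  · simp [hy₁]

theorem filter_inter_filter_of_agree {f₁ f₂ : α → β} (hagree : ∀ y ∈ Γ₁ ∩ Γ₂, f₁ y = f₂ y)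
    (b : α) (x : β) :
    Γ₁.filter (fun y => b ≤ y ∧ f₁ y ≤ x) ∩ Γ₂.filter (fun y => b ≤ y ∧ f₂ y ≤ x) =
      (Γ₁ ∩ Γ₂).filter (fun y => b ≤ y ∧ f₁ y ≤ x) := by
  ext y
  simp only [mem_inter, mem_filter]
  constructor
  · rintro ⟨⟨hy₁, hby, hy⟩, hy₂, -⟩
    exact ⟨⟨hy₁, hy₂⟩, hby, hy⟩
  · rintro ⟨⟨hy₁, hy₂⟩, hby, hy⟩
    exact ⟨⟨hy₁, hby, hy⟩, hy₂, hby, hagree y (mem_inter.mpr ⟨hy₁, hy₂⟩) ▸ hy⟩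

theorem filter_snd_eq_false {S B : Finset α} {σ : α → β × Bool} (hBS : B ⊆ S)
    (hbd : ∀ y ∈ B, (σ y).2 = false) (hin : ∀ y ∈ S \ B, (σ y).2 = true) (b : α) (x : β) :
    S.filter (fun y => b ≤ y ∧ (σ y).1 ≤ x ∧ (σ y).2 = false) =
      B.filter (fun y => b ≤ y ∧ (σ y).1 ≤ x) := by
  ext y
  simp only [mem_filter]
  constructor
  · rintro ⟨hyS, hby, hy, hfalse⟩
    refine ⟨by_contra fun hyB => ?_, hby, hy⟩
    simp [hin y (mem_sdiff.mpr ⟨hyS, hyB⟩)] at hfalse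
  · rintro ⟨hyB, hby, hy⟩
    exact ⟨hBS hyB, hby, hy, hbd y hyB⟩

theorem hPoly_agglutination_fiber {ρA : α → ℕ} {ρR : β → ℕ} {R : Finset β}
    {σ₁ σ₂ : α → β × Bool} {G : α → α → ℤ[X]} {b : α} (hρA : MonotoneOn ρA Γ₁)
    (hρR : MonotoneOn ρR R) (hbB : b ∈ Γ₁ ∩ Γ₂) (hagree : ∀ y ∈ Γ₁ ∩ Γ₂, σ₁ y = σ₂ y)
    (hbd : ∀ y ∈ Γ₁ ∩ Γ₂, (σ₁ y).2 = false)
    (hin₁ : ∀ y ∈ Γ₁ \ (Γ₁ ∩ Γ₂), (σ₁ y).2 = true)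
    (hin₂ : ∀ y ∈ Γ₂ \ (Γ₁ ∩ Γ₂), (σ₂ y).2 = true)
    (hSFS₁ : IsSFSOn Γ₁ ρA σ₁ (R ×ˢ univ) (fun p => ρR p.1 + p.2.toNat))
    (hSFS₂ : IsSFSOn Γ₂ ρA σ₂ (R ×ˢ univ) (fun p => ρR p.1 + p.2.toNat))
    (hSFSB : IsSFSOn (Γ₁ ∩ Γ₂) ρA (fun y => (σ₁ y).1) R ρR)
    (hG : IsGSystemOn (Γ₁ ∪ Γ₂) ρA G) {x : β} (hx : x ∈ R) (hbx : (σ₁ b).1 ≤ x) :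
    hPoly ρA G ((Γ₁ ∪ Γ₂).filter
        fun y => b ≤ y ∧ (if y ∈ Γ₁ then (σ₁ y).1 else (σ₂ y).1) ≤ x) b =
      (hPoly ρA G (Γ₁.filter fun y => b ≤ y ∧ (σ₁ y).1 ≤ x) b -
          hPoly ρA G (Γ₁.filter fun y => b ≤ y ∧ (σ₁ y).1 ≤ x ∧ (σ₁ y).2 = false) b) +
        (hPoly ρA G (Γ₂.filter fun y => b ≤ y ∧ (σ₂ y).1 ≤ x) b -
          hPoly ρA G (Γ₂.filter fun y => b ≤ y ∧ (σ₂ y).1 ≤ x ∧ (σ₂ y).2 = false) b) +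
        (X + 1) * hPoly ρA G ((Γ₁ ∩ Γ₂).filter fun y => b ≤ y ∧ (σ₁ y).1 ≤ x) b := by
  obtain ⟨hb₁, hb₂⟩ := mem_inter.mp hbB
  have hagree₁ : ∀ y ∈ Γ₁ ∩ Γ₂, (σ₁ y).1 = (σ₂ y).1 := fun y hy => by rw [hagree y hy]
  have hbd₂ : ∀ y ∈ Γ₁ ∩ Γ₂, (σ₂ y).2 = false := fun y hy => hagree y hy ▸ hbd y hy
  have hinter := filter_inter_filter_of_agree hagree₁ b x
  have hσ₂σ₁ : ((Γ₁ ∩ Γ₂).filter fun y => b ≤ y ∧ (σ₂ y).1 ≤ x) =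
      (Γ₁ ∩ Γ₂).filter fun y => b ≤ y ∧ (σ₁ y).1 ≤ x :=
    filter_congr fun y hy => by rw [hagree₁ y hy]
  have hsupB := hSFSB.sup_filter hρR hbB hx hbx
  have hbB' : b ∈ (Γ₁ ∩ Γ₂).filter fun y => b ≤ y ∧ (σ₁ y).1 ≤ x :=
    mem_filter.mpr ⟨hbB, le_rfl, hbx⟩
  have hdeg : ∀ y ∈ (Γ₁ ∩ Γ₂).filter (fun y => b ≤ y ∧ (σ₁ y).1 ≤ x),
      (G b y).natDegree + ρA b ≤ ρA y := by
    intro y hy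
    obtain ⟨hyB, hby, -⟩ := mem_filter.mp hy
    exact hG.natDegree_add_le (mem_union_left _ hb₁) (mem_union_left _ (mem_inter.mp hyB).1) hby
      (hρA hb₁ (mem_inter.mp hyB).1 hby)
  rw [filter_union_ite hagree₁,
    hPoly_union (hSFS₁.sup_filter_twins hρR hb₁ hx hbx)
      (hSFS₂.sup_filter_twins hρR hb₂ hx (hagree b hbB ▸ hbx)) (hinter ▸ hsupB)
      (hsupB ▸ le_sup hbB') (hinter ▸ hdeg),
    hinter, filter_snd_eq_false inter_subset_left hbd hin₁,
    filter_snd_eq_false inter_subset_right hbd₂ hin₂, hσ₂σ₁]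
  ring

end Agglutination

/-- `R^±` is realized as `R ×ˢ Bool` with the product order and rank `ρR r + ε`, the copy
`(r, false)` playing the role of `φ⁻ r`; the boundary is `Γ_B = Γ₁ ∩ Γ₂`, and the agglutinated map
`σ₁ ♯ σ₂` sends `y ∈ Γᵢ` to `(σᵢ y).1`. -/
theorem locH_agglutination_general {α β : Type*} [PartialOrder α] [PartialOrder β]
    (ρA : α → ℕ) (ρR : β → ℕ) (Γ₁ Γ₂ : Finset α)
    (hLE₁ : IsLowerEulerianOn Γ₁ ρA)
    (b : α) (hbB : b ∈ Γ₁ ∩ Γ₂)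
    (R : Finset β) (hR : IsEulerianOn R ρR)
    (t₀ : β) (ht₀ : t₀ ∈ R)
    (σ₁ σ₂ : α → β × Bool)
    (hagree : ∀ y ∈ Γ₁ ∩ Γ₂, σ₁ y = σ₂ y)
    (hbd : ∀ y ∈ Γ₁ ∩ Γ₂, (σ₁ y).2 = false)
    (hin₁ : ∀ y ∈ Γ₁ \ (Γ₁ ∩ Γ₂), (σ₁ y).2 = true)
    (hin₂ : ∀ y ∈ Γ₂ \ (Γ₁ ∩ Γ₂), (σ₂ y).2 = true)
    (hSFS₁ : IsSFSOn Γ₁ ρA σ₁ (R ×ˢ (Finset.univ : Finset Bool))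
      (fun p => ρR p.1 + p.2.toNat))
    (hSFS₂ : IsSFSOn Γ₂ ρA σ₂ (R ×ˢ (Finset.univ : Finset Bool))
      (fun p => ρR p.1 + p.2.toNat))
    (hSFSB : IsSFSOn (Γ₁ ∩ Γ₂) ρA (fun y => (σ₁ y).1) R ρR)
    (G : α → α → Polynomial ℤ) (hG : IsGSystemOn (Γ₁ ∪ Γ₂) ρA G)
    (G'R : β → β → Polynomial ℤ) (hG'R : IsDualGSystemOn R ρR G'R)
    (G'pm : β × Bool → β × Bool → Polynomial ℤ)
    (hG'pm : IsDualGSystemOn (R ×ˢ (Finset.univ : Finset Bool))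
      (fun p => ρR p.1 + p.2.toNat) G'pm) :
    relLocH ρA G (fun y => if y ∈ Γ₁ then (σ₁ y).1 else (σ₂ y).1) (Γ₁ ∪ Γ₂) b
        ρR G'R R t₀
      = relLocH ρA G σ₁ Γ₁ b (fun p => ρR p.1 + p.2.toNat) G'pm
          (R ×ˢ (Finset.univ : Finset Bool)) (t₀, true)
        + relLocH ρA G σ₂ Γ₂ b (fun p => ρR p.1 + p.2.toNat) G'pm
          (R ×ˢ (Finset.univ : Finset Bool)) (t₀, true)
        + (Polynomial.X + 1) * relLocH ρA G (fun y => (σ₁ y).1) (Γ₁ ∩ Γ₂) b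
            ρR G'R R t₀ := by
  have hρR : StrictMonoOn ρR R := fun x hx y hy hxy => hR.1.1.1.1 x hx y hy hxy
  have hρA : StrictMonoOn ρA Γ₁ := fun x hx y hy hxy => hLE₁.1.1.1 x hx y hy hxy
  have hσ₂b : σ₂ b = σ₁ b := (hagree b hbB).symm
  rw [relLocH_twins hρR hG'R hG'pm ht₀ (hbd b hbB),
    relLocH_twins hρR hG'R hG'pm ht₀ (hσ₂b ▸ hbd b hbB), hσ₂b]
  simp only [relLocH, if_pos (mem_inter.mp hbB).1, mul_sum, ← sum_add_distrib]
  refine sum_congr rfl fun x hx => ?_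
  obtain ⟨hxR, hbx, -⟩ := mem_filter.mp hx
  rw [hPoly_agglutination_fiber hρA.monotoneOn hρR.monotoneOn hbB hagree hbd hin₁ hin₂ hSFS₁
    hSFS₂ hSFSB hG hxR hbx]
  ring

/-- let `σ₁ : (Γ¹, Γ_B) → R^±` and `σ₂ : (Γ², Γ_B) → R^±` be strong formal
subdivisions with boundary sharing the same boundary `σ_B : Γ_B → R⁻`, with `Γ¹, Γ²`
finite lower Eulerian posets and `R` a finite Eulerian poset.  Here `Γ_B = Γ¹ ∩ Γ²` is a
lower set of each `Γⁱ`, no element of `Γ¹ ∖ Γ_B` is comparable to one of `Γ² ∖ Γ_B` (so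
`Γ¹ ∪ Γ²` realizes the agglutination `Γ¹ ♯_{Γ_B} Γ²`), `R^±` is realized as
`R ×ˢ Bool` with product order and rank `ρ^±(r, ε) = ρ_R r + ε` (with `(r, false) = φ⁻ r`),
and `R⁻ ≅ R`.  The agglutinated map `σ₁ ♯_{σ_B} σ₂ : Γ¹ ♯_{Γ_B} Γ² → R` is
`y ↦ (σᵢ y).1`.  Then the local `h`-polynomials satisfy
`ℓ_R(Γ¹ ♯_{Γ_B} Γ²; t) = ℓ_{R^±}(Γ¹; t) + ℓ_{R^±}(Γ²; t) + (t + 1) ℓ_{R⁻}(Γ_B; t)`. -/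
theorem locH_agglutination {α β : Type*} [PartialOrder α] [PartialOrder β]
    (ρA : α → ℕ) (ρR : β → ℕ) (Γ₁ Γ₂ : Finset α)
    (hlow₁ : ∀ x ∈ Γ₁, ∀ y ∈ Γ₁ ∩ Γ₂, x ≤ y → x ∈ Γ₁ ∩ Γ₂)
    (hlow₂ : ∀ x ∈ Γ₂, ∀ y ∈ Γ₁ ∩ Γ₂, x ≤ y → x ∈ Γ₁ ∩ Γ₂)
    (hincomp : ∀ x ∈ Γ₁ \ (Γ₁ ∩ Γ₂), ∀ y ∈ Γ₂ \ (Γ₁ ∩ Γ₂), ¬ x ≤ y ∧ ¬ y ≤ x)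
    (hLE₁ : IsLowerEulerianOn Γ₁ ρA) (hLE₂ : IsLowerEulerianOn Γ₂ ρA)
    (hrk : Γ₁.sup ρA = Γ₂.sup ρA) (hrkB : (Γ₁ ∩ Γ₂).sup ρA + 1 = Γ₁.sup ρA)
    (b : α) (hbB : b ∈ Γ₁ ∩ Γ₂) (hb : ∀ x ∈ Γ₁ ∪ Γ₂, b ≤ x)
    (R : Finset β) (hR : IsEulerianOn R ρR)
    (t₀ : β) (ht₀ : t₀ ∈ R) (htop : ∀ x ∈ R, x ≤ t₀)
    (σ₁ σ₂ : α → β × Bool)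
    (hagree : ∀ y ∈ Γ₁ ∩ Γ₂, σ₁ y = σ₂ y)
    (hbd : ∀ y ∈ Γ₁ ∩ Γ₂, (σ₁ y).2 = false)
    (hin₁ : ∀ y ∈ Γ₁ \ (Γ₁ ∩ Γ₂), (σ₁ y).2 = true)
    (hin₂ : ∀ y ∈ Γ₂ \ (Γ₁ ∩ Γ₂), (σ₂ y).2 = true)
    (hSFS₁ : IsSFSOn Γ₁ ρA σ₁ (R ×ˢ (Finset.univ : Finset Bool))
      (fun p => ρR p.1 + p.2.toNat))
    (hSFS₂ : IsSFSOn Γ₂ ρA σ₂ (R ×ˢ (Finset.univ : Finset Bool))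
      (fun p => ρR p.1 + p.2.toNat))
    (hSFSB : IsSFSOn (Γ₁ ∩ Γ₂) ρA (fun y => (σ₁ y).1) R ρR)
    (G : α → α → Polynomial ℤ) (hG : IsGSystemOn (Γ₁ ∪ Γ₂) ρA G)
    (G'R : β → β → Polynomial ℤ) (hG'R : IsDualGSystemOn R ρR G'R)
    (G'pm : β × Bool → β × Bool → Polynomial ℤ)
    (hG'pm : IsDualGSystemOn (R ×ˢ (Finset.univ : Finset Bool))
      (fun p => ρR p.1 + p.2.toNat) G'pm) :
    relLocH ρA G (fun y => if y ∈ Γ₁ then (σ₁ y).1 else (σ₂ y).1) (Γ₁ ∪ Γ₂) b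
        ρR G'R R t₀
      = relLocH ρA G σ₁ Γ₁ b (fun p => ρR p.1 + p.2.toNat) G'pm
          (R ×ˢ (Finset.univ : Finset Bool)) (t₀, true)
        + relLocH ρA G σ₂ Γ₂ b (fun p => ρR p.1 + p.2.toNat) G'pm
          (R ×ˢ (Finset.univ : Finset Bool)) (t₀, true)
        + (Polynomial.X + 1) * relLocH ρA G (fun y => (σ₁ y).1) (Γ₁ ∩ Γ₂) b
            ρR G'R R t₀ :=
  locH_agglutination_general ρA ρR Γ₁ Γ₂ hLE₁ b hbB R hR t₀ ht₀ σ₁ σ₂ hagree hbd hin₁ hin₂ hSFS₁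
    hSFS₂ hSFSB G hG G'R hG'R G'pm hG'pm

end
end

section
/- Let P = P_0 ∗ P_1 ∗ ⋯ ∗ P_k ⊂ ℝⁿ be a B_k-polytope, i.e. the Cayley sum of lattice polytopes P_0, …, P_k ⊂ ℝ^{n−k} with dim(P_1 + ⋯ + P_k) < k (Minkowski sum) and dim P_0 = n − k. Suppose that dim P_i ≥ 1 for all i = 0, 1, …, k and that P_0 is not a join. Then P is not a join. -/
open scoped Pointwise

noncomputable section

/-- A point of `ℝⁿ` is a lattice point if all its coordinates are integers. -/
def IsLatticePoint {n : ℕ} (x : Fin n → ℝ) : Prop := ∀ i, ∃ z : ℤ, x i = (z : ℝ)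

/-- A lattice polytope: the convex hull of finitely many lattice points. -/
def IsLatticePolytope {n : ℕ} (P : Set (Fin n → ℝ)) : Prop :=
  ∃ V : Finset (Fin n → ℝ), (∀ v ∈ V, IsLatticePoint v) ∧
    P = convexHull ℝ (V : Set (Fin n → ℝ))

/-- The dimension of a subset of `ℝⁿ`: the rank of the direction of its affine span. -/
def polyDim {n : ℕ} (S : Set (Fin n → ℝ)) : ℕ :=
  Module.finrank ℝ (affineSpan ℝ S).direction

/-- A face of a convex set: an extreme convex subset (this includes `∅` and the set itself). -/
def IsFace {n : ℕ} (K F : Set (Fin n → ℝ)) : Prop :=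
  IsExtreme ℝ K F ∧ Convex ℝ F

/-- The `d`-dimensional lattice volume (normalized so that a fundamental domain of the
lattice of the affine span has volume `1`, and multiplied by `d!`), computed via the
Ehrhart-type limit `d! · #(m·S ∩ ℤⁿ)/m^d`.  It is `0` if `dim S < d`. -/
def latticeVol {n : ℕ} (d : ℕ) (S : Set (Fin n → ℝ)) : ℝ :=
  Filter.limUnder Filter.atTop fun m : ℕ =>
    ((d.factorial : ℝ) * ({x ∈ (m : ℝ) • S | IsLatticePoint x}.ncard : ℝ)) / (m : ℝ) ^ d

/-- A polytope `P` contained in a cone `C` is convenient if `dim (P ∩ F) = dim F` for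
every nonempty face `F` of `C`. -/
def IsConvenient {n : ℕ} (C P : Set (Fin n → ℝ)) : Prop :=
  P ⊆ C ∧ ∀ F : Set (Fin n → ℝ), IsFace C F → F.Nonempty → polyDim (P ∩ F) = polyDim F

/-- The Newton number `ν_C(P) = Σ_F (−1)^{n−dim F} Vol_ℤ(P ∩ F)`, the sum running over
all nonempty faces `F` of the `n`-dimensional cone `C`.  (Note `(−1)^{n−dim F} = (−1)^{n+dim F}`.) -/
def newtonNumber {n : ℕ} (C P : Set (Fin n → ℝ)) : ℝ :=
  ∑ᶠ (F : Set (Fin n → ℝ)) (_ : IsFace C F ∧ F.Nonempty),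
    (-1 : ℝ) ^ (n + polyDim F) * latticeVol (polyDim F) (P ∩ F)

/-- The cone `ℝ^m_{≥0} ⊕ ℝ^{n−m} ⊂ ℝⁿ`. -/
def orthant (n m : ℕ) : Set (Fin n → ℝ) := {x | ∀ i : Fin n, (i : ℕ) < m → 0 ≤ x i}


/-- A lattice polytope `P` is a join of two nonempty faces `Q₁, Q₂`:
`⟨Q₁ − Q₁⟩ ∩ ⟨Q₂ − Q₂⟩ = 0`, `Q₁ ∩ Q₂ = ∅` and `conv(Q₁ ∪ Q₂) = P`. -/
def IsJoinPolytope {n : ℕ} (P : Set (Fin n → ℝ)) : Prop :=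
  ∃ Q₁ Q₂ : Set (Fin n → ℝ), IsFace P Q₁ ∧ IsFace P Q₂ ∧ Q₁.Nonempty ∧ Q₂.Nonempty ∧
    Submodule.span ℝ (Q₁ - Q₁) ⊓ Submodule.span ℝ (Q₂ - Q₂) = ⊥ ∧
    Q₁ ∩ Q₂ = ∅ ∧ convexHull ℝ (Q₁ ∪ Q₂) = P

/-
If `P = P₀ ∗ P₁ ∗ ⋯ ∗ P_k` were the join of faces `Q₁, Q₂`, every face of `P` would be the
convex hull of its intersections with `Q₁` and `Q₂`. Since `P₀` is a face of `P` and not a join,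
it lies in one of them, say `Q₁`. Then `⟨Q₁ − Q₁⟩` contains `⟨P₀ − P₀⟩ = ℝ^{n−k} × 0`, so the
projection to the last `k` coordinates is injective on `Q₂`. It is constant on the layer faces
`P_j × {e_j}`, which have at least two points, so each of them meets `Q₁`. Hence `Q₁` is
full-dimensional, and a face with an interior point is all of `P`, leaving no room for `Q₂`.
-/

open Set

section ConvexGeometry

variable {E : Type*} [AddCommGroup E] [Module ℝ E]

theorem isExtreme_sep_eq_of_le {K : Set E} {ℓ : E →ₗ[ℝ] ℝ} {c : ℝ} (h : ∀ x ∈ K, ℓ x ≤ c) :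
    IsExtreme ℝ K {x ∈ K | ℓ x = c} := by
  refine ⟨sep_subset _ _, ?_⟩
  rintro x₁ hx₁ x₂ hx₂ x ⟨-, hxc⟩ ⟨a, b, ha, hb, hab, rfl⟩
  have h₁ := h x₁ hx₁
  have h₂ := h x₂ hx₂
  simp only [map_add, map_smul, smul_eq_mul] at hxc
  have hc : a * c + b * c = c := by rw [← add_mul, hab, one_mul]
  refine ⟨hx₁, le_antisymm h₁ ?_⟩
  nlinarith [mul_le_mul_of_nonneg_left h₂ hb.le]

theorem convex_setOf_lt_union {ℓ : E →ₗ[ℝ] ℝ} {c : ℝ} {C : Set E} (hC : Convex ℝ C)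
    (hCℓ : ∀ x ∈ C, ℓ x = c) : Convex ℝ ({x | ℓ x < c} ∪ C) := by
  have hle : ∀ x ∈ {x | ℓ x < c} ∪ C, ℓ x ≤ c := by
    rintro x (hx | hx)
    exacts [le_of_lt hx, (hCℓ x hx).le]
  refine convex_iff_openSegment_subset.2 fun x hx y hy => ?_
  by_cases hxy : x ∈ C ∧ y ∈ C
  · exact (hC.openSegment_subset hxy.1 hxy.2).trans subset_union_right
  rintro _ ⟨a, b, ha, hb, hab, rfl⟩
  left
  have hx' := hle x hx
  have hy' := hle y hy
  have hlt : ℓ x < c ∨ ℓ y < c := by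
    rcases hx with hx | hx <;> rcases hy with hy | hy <;> simp_all
  simp only [mem_ofPred_eq, map_add, map_smul, smul_eq_mul]
  have hc : a * c + b * c = c := by rw [← add_mul, hab, one_mul]
  rcases hlt with hlt | hlt
  · nlinarith [mul_lt_mul_of_pos_left hlt ha, mul_le_mul_of_nonneg_left hy' hb.le]
  · nlinarith [mul_le_mul_of_nonneg_left hx' ha.le, mul_lt_mul_of_pos_left hlt hb]

theorem sep_convexHull_eq_convexHull_sep {S : Set E} {ℓ : E →ₗ[ℝ] ℝ} {c : ℝ}
    (h : ∀ x ∈ S, ℓ x ≤ c) :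
    {x ∈ convexHull ℝ S | ℓ x = c} = convexHull ℝ {x ∈ S | ℓ x = c} := by
  have hH : convexHull ℝ {x ∈ S | ℓ x = c} ⊆ {x | ℓ x = c} :=
    convexHull_min (fun x hx => hx.2) (convex_hyperplane ℓ.isLinear c)
  refine Subset.antisymm ?_ (subset_inter (convexHull_mono (sep_subset _ _)) hH)
  rintro x ⟨hxS, hxc⟩
  have hS : convexHull ℝ S ⊆ {x | ℓ x < c} ∪ convexHull ℝ {x ∈ S | ℓ x = c} :=
    convexHull_min (fun y hy => (h y hy).lt_or_eq.imp id fun hyc => subset_convexHull ℝ _ ⟨hy, hyc⟩)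
      (convex_setOf_lt_union (convex_convexHull ℝ _) hH)
  exact (hS hxS).resolve_left (by simp [hxc])

theorem isExtreme_convexHull_sep {S : Set E} {ℓ : E →ₗ[ℝ] ℝ} {c : ℝ} (h : ∀ x ∈ S, ℓ x ≤ c) :
    IsExtreme ℝ (convexHull ℝ S) (convexHull ℝ {x ∈ S | ℓ x = c}) := by
  rw [← sep_convexHull_eq_convexHull_sep h]
  exact isExtreme_sep_eq_of_le
    (convexHull_min h (convex_halfSpace_le ℓ.isLinear c) : convexHull ℝ S ⊆ {x | ℓ x ≤ c})

theorem IsExtreme.subset_convexHull_inter_union {Q₁ Q₂ F : Set E} (hQ₁ : Convex ℝ Q₁)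
    (hQ₂ : Convex ℝ Q₂) (hne₁ : Q₁.Nonempty) (hne₂ : Q₂.Nonempty)
    (hF : IsExtreme ℝ (convexHull ℝ (Q₁ ∪ Q₂)) F) : F ⊆ convexHull ℝ (F ∩ Q₁ ∪ F ∩ Q₂) := by
  intro x hxF
  have hx := hF.subset hxF
  rw [hQ₁.convexHull_union hQ₂ hne₁ hne₂, mem_convexJoin] at hx
  obtain ⟨a, ha, b, hb, hxab⟩ := hx
  have haP : a ∈ convexHull ℝ (Q₁ ∪ Q₂) := subset_convexHull ℝ _ (Or.inl ha)
  have hbP : b ∈ convexHull ℝ (Q₁ ∪ Q₂) := subset_convexHull ℝ _ (Or.inr hb)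
  by_cases hxa : a = x
  · exact subset_convexHull ℝ _ (Or.inl ⟨hxa ▸ hxF, hxa ▸ ha⟩)
  by_cases hxb : b = x
  · exact subset_convexHull ℝ _ (Or.inr ⟨hxb ▸ hxF, hxb ▸ hb⟩)
  have hseg := mem_openSegment_of_ne_left_right hxa hxb hxab
  exact segment_subset_convexHull (s := F ∩ Q₁ ∪ F ∩ Q₂)
    (Or.inl ⟨hF.left_mem_of_mem_openSegment haP hbP hxF hseg, ha⟩)
    (Or.inr ⟨hF.right_mem_of_mem_openSegment haP hbP hxF hseg, hb⟩) hxab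

end ConvexGeometry

theorem IsExtreme.subset_of_mem_interior {E : Type*} [NormedAddCommGroup E] [NormedSpace ℝ E]
    {P Q : Set E} {x : E} (hQ : IsExtreme ℝ P Q) (hx : x ∈ interior Q) : P ⊆ Q := by
  intro q hq
  obtain ⟨t, ht, hz⟩ := (eventually_homothety_mem_of_mem_interior ℝ q hx).exists_gt
  have hseg : x ∈ openSegment ℝ q (AffineMap.homothety q t x) := by
    have ht0 : t ≠ 0 := by positivity
    refine ⟨1 - t⁻¹, t⁻¹, by simp [inv_lt_one_of_one_lt₀ ht], by positivity, by ring, ?_⟩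
    rw [AffineMap.homothety_apply, vsub_eq_sub, vadd_eq_add, smul_add, smul_smul,
      inv_mul_cancel₀ ht0]
    module
  exact hQ.left_mem_of_mem_openSegment hq (hQ.subset hz) (interior_subset hx) hseg

structure IsJoinOf {E : Type*} [AddCommGroup E] [Module ℝ E] (P Q₁ Q₂ : Set E) : Prop where
  isExtreme_left : IsExtreme ℝ P Q₁
  isExtreme_right : IsExtreme ℝ P Q₂
  convex_left : Convex ℝ Q₁
  convex_right : Convex ℝ Q₂
  nonempty_left : Q₁.Nonempty
  nonempty_right : Q₂.Nonempty
  span_inf_span : Submodule.span ℝ (Q₁ - Q₁) ⊓ Submodule.span ℝ (Q₂ - Q₂) = ⊥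
  inter_eq_empty : Q₁ ∩ Q₂ = ∅
  convexHull_union : convexHull ℝ (Q₁ ∪ Q₂) = P

theorem isJoinPolytope_iff {n : ℕ} {P : Set (Fin n → ℝ)} :
    IsJoinPolytope P ↔ ∃ Q₁ Q₂, IsJoinOf P Q₁ Q₂ :=
  ⟨fun ⟨Q₁, Q₂, ⟨he₁, hc₁⟩, ⟨he₂, hc₂⟩, hn₁, hn₂, hs, hi, hu⟩ =>
      ⟨Q₁, Q₂, he₁, he₂, hc₁, hc₂, hn₁, hn₂, hs, hi, hu⟩,
    fun ⟨Q₁, Q₂, ⟨he₁, he₂, hc₁, hc₂, hn₁, hn₂, hs, hi, hu⟩⟩ =>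
      ⟨Q₁, Q₂, ⟨he₁, hc₁⟩, ⟨he₂, hc₂⟩, hn₁, hn₂, hs, hi, hu⟩⟩

namespace IsJoinOf

section

variable {E : Type*} [AddCommGroup E] [Module ℝ E] {P Q₁ Q₂ F : Set E}

theorem symm (h : IsJoinOf P Q₁ Q₂) : IsJoinOf P Q₂ Q₁ where
  isExtreme_left := h.isExtreme_right
  isExtreme_right := h.isExtreme_left
  convex_left := h.convex_right
  convex_right := h.convex_left
  nonempty_left := h.nonempty_right
  nonempty_right := h.nonempty_left
  span_inf_span := by rw [inf_comm, h.span_inf_span]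
  inter_eq_empty := by rw [inter_comm, h.inter_eq_empty]
  convexHull_union := by rw [union_comm, h.convexHull_union]

theorem subset_convexHull_inter_union (h : IsJoinOf P Q₁ Q₂) (hF : IsExtreme ℝ P F) :
    F ⊆ convexHull ℝ (F ∩ Q₁ ∪ F ∩ Q₂) :=
  IsExtreme.subset_convexHull_inter_union h.convex_left h.convex_right h.nonempty_left
    h.nonempty_right (h.convexHull_union ▸ hF)

theorem subset_left_of_inter_right_eq_empty (h : IsJoinOf P Q₁ Q₂) (hF : IsExtreme ℝ P F)
    (hF₂ : F ∩ Q₂ = ∅) : F ⊆ Q₁ := by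
  have := h.subset_convexHull_inter_union hF
  rw [hF₂, union_empty] at this
  exact this.trans (convexHull_min inter_subset_right h.convex_left)

theorem inter (h : IsJoinOf P Q₁ Q₂) (hF : IsExtreme ℝ P F) (hFc : Convex ℝ F)
    (hF₁ : (F ∩ Q₁).Nonempty) (hF₂ : (F ∩ Q₂).Nonempty) : IsJoinOf F (F ∩ Q₁) (F ∩ Q₂) where
  isExtreme_left := (hF.inter h.isExtreme_left).mono hF.subset inter_subset_left
  isExtreme_right := (hF.inter h.isExtreme_right).mono hF.subset inter_subset_left
  convex_left := hFc.inter h.convex_left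
  convex_right := hFc.inter h.convex_right
  nonempty_left := hF₁
  nonempty_right := hF₂
  span_inf_span := le_bot_iff.1 <| h.span_inf_span ▸ inf_le_inf
    (Submodule.span_mono (sub_subset_sub inter_subset_right inter_subset_right))
    (Submodule.span_mono (sub_subset_sub inter_subset_right inter_subset_right))
  inter_eq_empty := subset_empty_iff.1 <| h.inter_eq_empty ▸
    inter_subset_inter inter_subset_right inter_subset_right
  convexHull_union := Subset.antisymm
    (convexHull_min (union_subset inter_subset_left inter_subset_left) hFc)
    (h.subset_convexHull_inter_union hF)

theorem exists_isJoinOf_or_subset_or_subset (h : IsJoinOf P Q₁ Q₂) (hF : IsExtreme ℝ P F)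
    (hFc : Convex ℝ F) : (∃ R₁ R₂, IsJoinOf F R₁ R₂) ∨ F ⊆ Q₁ ∨ F ⊆ Q₂ := by
  rcases (F ∩ Q₁).eq_empty_or_nonempty with hF₁ | hF₁
  · exact Or.inr (Or.inr (h.symm.subset_left_of_inter_right_eq_empty hF hF₁))
  rcases (F ∩ Q₂).eq_empty_or_nonempty with hF₂ | hF₂
  · exact Or.inr (Or.inl (h.subset_left_of_inter_right_eq_empty hF hF₂))
  exact Or.inl ⟨_, _, h.inter hF hFc hF₁ hF₂⟩

variable {V : Type*} [AddCommGroup V] [Module ℝ V] {f : E →ₗ[ℝ] V}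

theorem injOn_right (h : IsJoinOf P Q₁ Q₂) (hf : LinearMap.ker f ≤ Submodule.span ℝ (Q₁ - Q₁)) :
    InjOn f Q₂ := by
  intro a ha b hb hab
  have hQ₁ : a - b ∈ Submodule.span ℝ (Q₁ - Q₁) := hf (by simp [hab])
  have hQ₂ : a - b ∈ Submodule.span ℝ (Q₂ - Q₂) := Submodule.subset_span ⟨a, ha, b, hb, rfl⟩
  have := h.span_inf_span ▸ Submodule.mem_inf.2 ⟨hQ₁, hQ₂⟩
  rwa [Submodule.mem_bot, sub_eq_zero] at this

/-- A face on which `f` is constant cannot lie in `Q₂`, where `f` is injective, unless it is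
a point. -/
theorem inter_left_nonempty (h : IsJoinOf P Q₁ Q₂)
    (hf : LinearMap.ker f ≤ Submodule.span ℝ (Q₁ - Q₁)) (hF : IsExtreme ℝ P F) {v : V}
    (hfF : ∀ x ∈ F, f x = v) (hFnt : F.Nontrivial) : (F ∩ Q₁).Nonempty := by
  rw [nonempty_iff_ne_empty]
  intro hF₁
  have hFQ₂ := h.symm.subset_left_of_inter_right_eq_empty hF hF₁
  exact hFnt.not_subsingleton fun x hx y hy =>
    h.injOn_right hf (hFQ₂ hx) (hFQ₂ hy) ((hfF x hx).trans (hfF y hy).symm)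

theorem span_left_eq_top (h : IsJoinOf P Q₁ Q₂)
    (hf : LinearMap.ker f ≤ Submodule.span ℝ (Q₁ - Q₁)) {ι : Type*} {v : ι → V}
    (hv : Submodule.span ℝ (range v) = ⊤) {F : ι → Set E} (hF : ∀ i, IsExtreme ℝ P (F i))
    (hfF : ∀ i, ∀ x ∈ F i, f x = v i) (hFnt : ∀ i, (F i).Nontrivial) {p₀ : E} (hp₀ : p₀ ∈ Q₁)
    (hfp₀ : f p₀ = 0) : Submodule.span ℝ (Q₁ - Q₁) = ⊤ := by
  choose p hp using fun i => h.inter_left_nonempty hf (hF i) (hfF i) (hFnt i)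
  have hmap : (Submodule.span ℝ (Q₁ - Q₁)).map f = ⊤ := by
    rw [eq_top_iff, ← hv, Submodule.span_le]
    rintro _ ⟨i, rfl⟩
    refine ⟨p i - p₀, Submodule.subset_span ⟨p i, (hp i).2, p₀, hp₀, rfl⟩, ?_⟩
    simp [hfF i _ (hp i).1, hfp₀]
  rw [← Submodule.comap_map_eq_self hf, hmap, Submodule.comap_top]

end

theorem span_left_ne_top {E : Type*} [NormedAddCommGroup E] [NormedSpace ℝ E]
    [FiniteDimensional ℝ E] {P Q₁ Q₂ : Set E} (h : IsJoinOf P Q₁ Q₂) :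
    Submodule.span ℝ (Q₁ - Q₁) ≠ ⊤ := by
  intro htop
  have haff : affineSpan ℝ Q₁ = ⊤ :=
    (AffineSubspace.affineSpan_eq_top_iff_vectorSpan_eq_top_of_nonempty ℝ E E
      h.nonempty_left).2 htop
  obtain ⟨x, hx⟩ := h.convex_left.interior_nonempty_iff_affineSpan_eq_top.2 haff
  obtain ⟨q, hq⟩ := h.nonempty_right
  have hqQ₁ := h.isExtreme_left.subset_of_mem_interior hx (h.isExtreme_right.subset hq)
  exact eq_empty_iff_forall_notMem.1 h.inter_eq_empty q ⟨hqQ₁, hq⟩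

end IsJoinOf

theorem IsLatticePolytope.convex {n : ℕ} {P : Set (Fin n → ℝ)} (h : IsLatticePolytope P) :
    Convex ℝ P := by
  obtain ⟨V, -, rfl⟩ := h
  exact convex_convexHull ℝ _

theorem nontrivial_of_one_le_polyDim {n : ℕ} {S : Set (Fin n → ℝ)} (h : 1 ≤ polyDim S) :
    S.Nontrivial := by
  by_contra hS
  rw [not_nontrivial_iff] at hS
  simp [polyDim, direction_affineSpan, vectorSpan_of_subsingleton _ hS] at h

section Cayley

variable {m k : ℕ}

variable (m k) in
def projLast : (Fin (m + k) → ℝ) →ₗ[ℝ] (Fin k → ℝ) :=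
  LinearMap.funLeft ℝ ℝ (Fin.natAdd m)

theorem projLast_eq_zero {x : Fin (m + k) → ℝ} (hx : ∀ i : Fin (m + k), m ≤ (i : ℕ) → x i = 0) :
    projLast m k x = 0 :=
  funext fun j => hx _ (Nat.le_add_right m j)

theorem projLast_add_single (x : Fin (m + k) → ℝ) (j : Fin k) :
    projLast m k (x + Pi.single (Fin.natAdd m j) 1) = projLast m k x + Pi.single j 1 := by
  ext j'
  simp [projLast, Pi.single_apply, (Fin.natAdd_injective k m).eq_iff]

theorem finrank_ker_projLast : Module.finrank ℝ (LinearMap.ker (projLast m k)) = m := by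
  have hsurj : Function.Surjective (projLast m k) :=
    LinearMap.funLeft_surjective_of_injective _ _ _ (Fin.natAdd_injective k m)
  have h := LinearMap.finrank_range_add_finrank_ker (projLast m k)
  rw [LinearMap.range_eq_top.2 hsurj, finrank_top] at h
  simp only [Module.finrank_fin_fun] at h
  omega

theorem span_sub_eq_ker_projLast {P₀ : Set (Fin (m + k) → ℝ)}
    (h₀ : ∀ x ∈ P₀, projLast m k x = 0) (hdim : polyDim P₀ = m) :
    Submodule.span ℝ (P₀ - P₀) = LinearMap.ker (projLast m k) := by
  refine Submodule.eq_of_le_of_finrank_le ?_ ?_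
  · rw [Submodule.span_le]
    rintro _ ⟨a, ha, b, hb, rfl⟩
    simp [h₀ a ha, h₀ b hb]
  · rw [finrank_ker_projLast]
    conv_lhs => rw [← hdim, polyDim, direction_affineSpan]
    rfl

variable (m) in
def cayleyLayer (j : Fin k) (Q : Set (Fin (m + k) → ℝ)) : Set (Fin (m + k) → ℝ) :=
  (fun v => v + Pi.single (Fin.natAdd m j) (1 : ℝ)) '' Q

def cayleySum (P₀ : Set (Fin (m + k) → ℝ)) (Q : Fin k → Set (Fin (m + k) → ℝ)) :
    Set (Fin (m + k) → ℝ) :=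
  convexHull ℝ (P₀ ∪ ⋃ j, cayleyLayer m j (Q j))

variable {P₀ : Set (Fin (m + k) → ℝ)} {Q : Fin k → Set (Fin (m + k) → ℝ)}

theorem projLast_eq_single_of_mem_cayleyLayer {j : Fin k} (hQ : ∀ x ∈ Q j, projLast m k x = 0)
    {x : Fin (m + k) → ℝ} (hx : x ∈ cayleyLayer m j (Q j)) : projLast m k x = Pi.single j 1 := by
  obtain ⟨v, hv, rfl⟩ := hx
  rw [projLast_add_single, hQ v hv, zero_add]

theorem isExtreme_cayleySum_base (h₀ : ∀ x ∈ P₀, projLast m k x = 0)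
    (hQ : ∀ j, ∀ x ∈ Q j, projLast m k x = 0) :
    IsExtreme ℝ (cayleySum P₀ Q) (convexHull ℝ P₀) := by
  set ℓ : (Fin (m + k) → ℝ) →ₗ[ℝ] ℝ := -(∑ j, LinearMap.proj j) ∘ₗ projLast m k
  have hℓ : ∀ j, ∀ x ∈ cayleyLayer m j (Q j), ℓ x = -1 := fun j x hx => by
    simp [ℓ, projLast_eq_single_of_mem_cayleyLayer (hQ j) hx]
  have hℓ₀ : ∀ x ∈ P₀, ℓ x = 0 := fun x hx => by simp [ℓ, h₀ x hx]
  have hsep : {x ∈ P₀ ∪ ⋃ j, cayleyLayer m j (Q j) | ℓ x = 0} = P₀ := by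
    ext x
    simp only [mem_union, mem_iUnion]
    refine ⟨?_, fun hx => ⟨Or.inl hx, hℓ₀ x hx⟩⟩
    rintro ⟨hx | ⟨j, hx⟩, hx0⟩
    · exact hx
    · norm_num [hℓ j x hx] at hx0
  have hle : ∀ x ∈ P₀ ∪ ⋃ j, cayleyLayer m j (Q j), ℓ x ≤ 0 := by
    rintro x (hx | hx)
    · exact (hℓ₀ x hx).le
    · obtain ⟨j, hx⟩ := mem_iUnion.1 hx
      norm_num [hℓ j x hx]
  have h := isExtreme_convexHull_sep hle
  rwa [hsep] at h

theorem isExtreme_cayleySum_layer (h₀ : ∀ x ∈ P₀, projLast m k x = 0)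
    (hQ : ∀ j, ∀ x ∈ Q j, projLast m k x = 0) (j : Fin k) :
    IsExtreme ℝ (cayleySum P₀ Q) (convexHull ℝ (cayleyLayer m j (Q j))) := by
  set ℓ : (Fin (m + k) → ℝ) →ₗ[ℝ] ℝ := LinearMap.proj j ∘ₗ projLast m k
  have hℓ : ∀ j', ∀ x ∈ cayleyLayer m j' (Q j'), ℓ x = if j = j' then 1 else 0 :=
    fun j' x hx => by simp [ℓ, projLast_eq_single_of_mem_cayleyLayer (hQ j') hx, Pi.single_apply]
  have hℓ₀ : ∀ x ∈ P₀, ℓ x = 0 := fun x hx => by simp [ℓ, h₀ x hx]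
  have hsep : {x ∈ P₀ ∪ ⋃ j', cayleyLayer m j' (Q j') | ℓ x = 1} = cayleyLayer m j (Q j) := by
    ext x
    simp only [mem_union, mem_iUnion]
    refine ⟨?_, fun hx => ⟨Or.inr ⟨j, hx⟩, by simp [hℓ j x hx]⟩⟩
    rintro ⟨hx | ⟨j', hx⟩, hx1⟩
    · norm_num [hℓ₀ x hx] at hx1
    · by_cases hj : j = j'
      · exact hj ▸ hx
      · norm_num [hℓ j' x hx, hj] at hx1
  have hle : ∀ x ∈ P₀ ∪ ⋃ j', cayleyLayer m j' (Q j'), ℓ x ≤ 1 := by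
    rintro x (hx | hx)
    · norm_num [hℓ₀ x hx]
    · obtain ⟨j', hx⟩ := mem_iUnion.1 hx
      rw [hℓ j' x hx]
      split_ifs <;> norm_num
  have h := isExtreme_convexHull_sep hle
  rwa [hsep] at h

theorem projLast_eq_single_of_mem_convexHull_cayleyLayer {j : Fin k}
    (hQ : ∀ x ∈ Q j, projLast m k x = 0) {x : Fin (m + k) → ℝ}
    (hx : x ∈ convexHull ℝ (cayleyLayer m j (Q j))) :
    projLast m k x = Pi.single j 1 :=
  convexHull_min (fun _ hy => projLast_eq_single_of_mem_cayleyLayer hQ hy)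
    ((convex_singleton _).linear_preimage (projLast m k)) hx

theorem not_isJoinOf_cayleySum_of_subset_left (h₀ : ∀ x ∈ P₀, projLast m k x = 0)
    (hQ : ∀ j, ∀ x ∈ Q j, projLast m k x = 0) (hne : P₀.Nonempty) (hdim : polyDim P₀ = m)
    (hdQ : ∀ j, 1 ≤ polyDim (Q j)) {Q₁ Q₂ : Set (Fin (m + k) → ℝ)}
    (hJ : IsJoinOf (cayleySum P₀ Q) Q₁ Q₂) (hP₀ : P₀ ⊆ Q₁) : False := by
  have hker : LinearMap.ker (projLast m k) ≤ Submodule.span ℝ (Q₁ - Q₁) :=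
    span_sub_eq_ker_projLast h₀ hdim ▸ Submodule.span_mono (sub_subset_sub hP₀ hP₀)
  have hlayer : ∀ j, (convexHull ℝ (cayleyLayer m j (Q j))).Nontrivial := fun j =>
    ((nontrivial_of_one_le_polyDim (hdQ j)).image (add_left_injective _)).mono
      (subset_convexHull ℝ _)
  obtain ⟨p₀, hp₀⟩ := hne
  exact hJ.span_left_ne_top <| hJ.span_left_eq_top hker (Pi.basisFun ℝ (Fin k)).span_eq
    (isExtreme_cayleySum_layer h₀ hQ) (fun j _ hx => by
      rw [Pi.basisFun_apply]; exact projLast_eq_single_of_mem_convexHull_cayleyLayer (hQ j) hx)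
    hlayer (hP₀ hp₀) (h₀ p₀ hp₀)

end Cayley

theorem bk_polytope_not_join_general {m k : ℕ}
    (P₀ : Set (Fin (m + k) → ℝ)) (Q : Fin k → Set (Fin (m + k) → ℝ))
    (hsub₀ : ∀ x ∈ P₀, ∀ i : Fin (m + k), m ≤ (i : ℕ) → x i = 0)
    (hsub : ∀ j : Fin k, ∀ x ∈ Q j, ∀ i : Fin (m + k), m ≤ (i : ℕ) → x i = 0)
    (h₀ : IsLatticePolytope P₀) (h₀ne : P₀.Nonempty)
    (hdim₀ : polyDim P₀ = m)
    (hdQ : ∀ j, 1 ≤ polyDim (Q j))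
    (hnotjoin : ¬ IsJoinPolytope P₀)
    (P : Set (Fin (m + k) → ℝ))
    (hPdef : P = convexHull ℝ
      (P₀ ∪ ⋃ j : Fin k, (fun v => v + Pi.single (Fin.natAdd m j) (1 : ℝ)) '' Q j)) :
    ¬ IsJoinPolytope P := by
  have hπ₀ : ∀ x ∈ P₀, projLast m k x = 0 := fun x hx => projLast_eq_zero (hsub₀ x hx)
  have hπQ : ∀ j, ∀ x ∈ Q j, projLast m k x = 0 := fun j x hx => projLast_eq_zero (hsub j x hx)
  have hface := isExtreme_cayleySum_base hπ₀ hπQ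
  rw [h₀.convex.convexHull_eq] at hface
  subst hPdef
  intro hJ
  obtain ⟨Q₁, Q₂, hJ⟩ := isJoinPolytope_iff.1 hJ
  rcases hJ.exists_isJoinOf_or_subset_or_subset hface h₀.convex with hjoin | hQ₁ | hQ₂
  · exact hnotjoin (isJoinPolytope_iff.2 hjoin)
  · exact not_isJoinOf_cayleySum_of_subset_left hπ₀ hπQ h₀ne hdim₀ hdQ hJ hQ₁
  · exact not_isJoinOf_cayleySum_of_subset_left hπ₀ hπQ h₀ne hdim₀ hdQ hJ.symm hQ₂

/-- let `P = P₀ ∗ P₁ ∗ ⋯ ∗ P_k ⊂ ℝⁿ` be a `B_k`-polytope (`n = m + k`, the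
`P_i ⊂ ℝ^{n−k}` lattice polytopes with `dim (P₁ + ⋯ + P_k) < k` and `dim P₀ = n − k`).
If `dim P_i ≥ 1` for all `i` and `P₀` is not a join, then `P` is not a join. -/
theorem bk_polytope_not_join {m k : ℕ}
    (P₀ : Set (Fin (m + k) → ℝ)) (Q : Fin k → Set (Fin (m + k) → ℝ))
    (hsub₀ : ∀ x ∈ P₀, ∀ i : Fin (m + k), m ≤ (i : ℕ) → x i = 0)
    (hsub : ∀ j : Fin k, ∀ x ∈ Q j, ∀ i : Fin (m + k), m ≤ (i : ℕ) → x i = 0)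
    (h₀ : IsLatticePolytope P₀) (h₀ne : P₀.Nonempty)
    (hQ : ∀ j, IsLatticePolytope (Q j) ∧ (Q j).Nonempty)
    (hdim₀ : polyDim P₀ = m)
    (hmink : polyDim {x | ∃ f : Fin k → (Fin (m + k) → ℝ),
        (∀ j, f j ∈ Q j) ∧ x = ∑ j, f j} < k)
    (hd₀ : 1 ≤ polyDim P₀) (hdQ : ∀ j, 1 ≤ polyDim (Q j))
    (hnotjoin : ¬ IsJoinPolytope P₀)
    (P : Set (Fin (m + k) → ℝ))
    (hPdef : P = convexHull ℝ
      (P₀ ∪ ⋃ j : Fin k, (fun v => v + Pi.single (Fin.natAdd m j) (1 : ℝ)) '' Q j)) :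
    ¬ IsJoinPolytope P :=
  bk_polytope_not_join_general P₀ Q hsub₀ hsub h₀ h₀ne hdim₀ hdQ hnotjoin P hPdef

end
end
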